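/- arXiv:1806.02362 — 3 statements merged into one kernel-verified Lean document; each statement's English description precedes it below -/
import Mathlib

section
/- Let Q : ℕ → ℕ → ℚ satisfy: (i) Q(0,f) = (if f = 1 then 1 else 0) and Q(n,0) = 0; (ii) the cut-and-slide formula: for all n, f ≥ 1, (f−1)·Q(n,f) = Σ_{i+j=n−1} Σ_{f1+f2=f, f1,f2≥1} (2+i−f1)·Q(i,f1)·(2j+1)·Q(j,f2); (iii) the generalized Rémy formula: for all n ≥ 1 and f ≥ 1, (2+n−f)·Q(n,f) = 2(2n−1)·Q(n−1,f) + Σ_{i+j=n−1} Σ_{f1+f2=f, f1,f2≥1} (2+i−f1)·Q(i,f1)·(2+j−f2)·Q(j,f2); (iv) the dual formula: for all n, f, (n−f+1)·Q(n,f) = Σ_{i+j=n−1} Σ_{f1+f2=f+1, f1,f2≥1} (2i+1)·Q(i,f1)·f2·Q(j,f2). Then Q satisfies the planar Carrell–Chapuy formula: for all n ≥ 1, f ≥ 1, (n+1)·Q(n,f) = 2(2n−1)·Q(n−1,f) + 2(2n−1)·Q(n−1,f−1) + 3·Σ_{i+j=n−2} Σ_{f1+f2=f, f1,f2≥1} (2i+1)(2j+1)·Q(i,f1)·Q(j,f2).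 -/
/-- `Σ_{i+j=n−1, i,j≥0} Σ_{f1+f2=f, f1,f2≥1} (2+i−f1)·Q(i,f1)·(2j+1)·Q(j,f2)`,
the right-hand side of the cut-and-slide formula. -/
def csSum (Q : ℕ → ℕ → ℚ) (n f : ℕ) : ℚ :=
  ∑ i ∈ Finset.range (n + 1), ∑ j ∈ Finset.range (n + 1),
    ∑ f1 ∈ Finset.range (f + 1), ∑ f2 ∈ Finset.range (f + 1),
      if i + j + 1 = n ∧ f1 + f2 = f ∧ 1 ≤ f1 ∧ 1 ≤ f2 then
        (2 + (i : ℚ) - (f1 : ℚ)) * Q i f1 * (2 * (j : ℚ) + 1) * Q j f2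
      else 0

/-- `Σ_{i+j=n−1, i,j≥0} Σ_{f1+f2=f, f1,f2≥1} (2+i−f1)·Q(i,f1)·(2+j−f2)·Q(j,f2)`,
the quadratic term of the generalized Rémy formula. -/
def remySum (Q : ℕ → ℕ → ℚ) (n f : ℕ) : ℚ :=
  ∑ i ∈ Finset.range (n + 1), ∑ j ∈ Finset.range (n + 1),
    ∑ f1 ∈ Finset.range (f + 1), ∑ f2 ∈ Finset.range (f + 1),
      if i + j + 1 = n ∧ f1 + f2 = f ∧ 1 ≤ f1 ∧ 1 ≤ f2 then
        (2 + (i : ℚ) - (f1 : ℚ)) * Q i f1 * (2 + (j : ℚ) - (f2 : ℚ)) * Q j f2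
      else 0

/-- `Σ_{i+j=n−1, i,j≥0} Σ_{f1+f2=f+1, f1,f2≥1} (2i+1)·Q(i,f1)·f2·Q(j,f2)`,
the right-hand side of the dual cut-and-slide formula. -/
def dualSum (Q : ℕ → ℕ → ℚ) (n f : ℕ) : ℚ :=
  ∑ i ∈ Finset.range (n + 1), ∑ j ∈ Finset.range (n + 1),
    ∑ f1 ∈ Finset.range (f + 2), ∑ f2 ∈ Finset.range (f + 2),
      if i + j + 1 = n ∧ f1 + f2 = f + 1 ∧ 1 ≤ f1 ∧ 1 ≤ f2 then
        (2 * (i : ℚ) + 1) * Q i f1 * (f2 : ℚ) * Q j f2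
      else 0

/-- The quadratic term of the planar Carrell–Chapuy recurrence (without the factor 3):
`Σ_{i+j=n−2, i,j≥0} Σ_{f1+f2=f, f1,f2≥1} (2i+1)(2j+1)·Q(i,f1)·Q(j,f2)`. -/
def ccQuad (Q : ℕ → ℕ → ℚ) (n f : ℕ) : ℚ :=
  ∑ i ∈ Finset.range (n + 1), ∑ j ∈ Finset.range (n + 1),
    ∑ f1 ∈ Finset.range (f + 1), ∑ f2 ∈ Finset.range (f + 1),
      if i + j + 2 = n ∧ f1 + f2 = f ∧ 1 ≤ f1 ∧ 1 ≤ f2 then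
        (2 * (i : ℚ) + 1) * (2 * (j : ℚ) + 1) * Q i f1 * Q j f2
      else 0

/-!
Let `x = X` mark edges and `u = C X` faces in `ℚ⟦X⟧⟦X⟧`, and let `A, B, E, G` be the generating
functions of `Q` weighted by `v = 2 + n - f`, `2n + 1`, `n + 1` and `f`. The cut-and-slide,
Rémy and dual formulas say `E = A + xAB`, `A = u + 2xB + xA²` and `uE = uG + xBG`, and
`B + A + G = 3E` because `(2n + 1) + v + f = 3(n + 1)`. A linear combination of these relations
is `(A² + AB - 2uB - 3xB²)(1 - xA) = 0`; as `1 - xA` is a unit, `A² + AB = 2uB + 3xB²`, and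
then `E = A + xAB = u + 2xB + x(A² + AB) = u + 2xB + 2xuB + 3x²B²`, whose coefficients are the
Carrell–Chapuy recurrence.
-/

open Finset PowerSeries

namespace Finset

theorem sum_range_sum_range_ite_add_eq {M : Type*} [AddCommMonoid M] {c N : ℕ} (hc : c < N)
    (h : ℕ → ℕ → M) :
    ∑ i ∈ range N, ∑ j ∈ range N, (if i + j = c then h i j else 0) =
      ∑ p ∈ antidiagonal c, h p.1 p.2 := by
  rw [← sum_product' (f := fun i j => if i + j = c then h i j else 0), ← sum_filter]
  refine sum_congr (ext fun p => ?_) fun _ _ => rfl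
  simp only [mem_filter, mem_product, mem_range, HasAntidiagonal.mem_antidiagonal]
  omega

theorem sum_range_sum_range_ite_add_eq_and_add_eq {M : Type*} [AddCommMonoid M] {c d N K : ℕ}
    (hc : c < N) (hd : d < K) (t : ℕ → ℕ → ℕ → ℕ → M) :
    ∑ i ∈ range N, ∑ j ∈ range N, ∑ f1 ∈ range K, ∑ f2 ∈ range K,
        (if i + j = c ∧ f1 + f2 = d then t i j f1 f2 else 0) =
      ∑ p ∈ antidiagonal c, ∑ q ∈ antidiagonal d, t p.1 p.2 q.1 q.2 := by
  have inner (i j : ℕ) : ∑ f1 ∈ range K, ∑ f2 ∈ range K,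
      (if i + j = c ∧ f1 + f2 = d then t i j f1 f2 else 0) =
        if i + j = c then ∑ q ∈ antidiagonal d, t i j q.1 q.2 else 0 := by
    split_ifs with hij
    · simp only [hij, true_and, sum_range_sum_range_ite_add_eq hd]
    · simp only [hij, false_and, if_false, sum_const_zero]
  simp only [inner, sum_range_sum_range_ite_add_eq hc]

end Finset

namespace PowerSeries

theorem isUnit_one_sub_X_mul {R : Type*} [CommRing R] (φ : R⟦X⟧) : IsUnit (1 - X * φ) :=
  isUnit_iff_constantCoeff.mpr (by simp)

variable {R : Type*} [CommSemiring R]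

theorem coeff_coeff_mul (φ ψ : R⟦X⟧⟦X⟧) (n f : ℕ) :
    coeff f (coeff n (φ * ψ)) = ∑ p ∈ antidiagonal n, ∑ q ∈ antidiagonal f,
      coeff q.1 (coeff p.1 φ) * coeff q.2 (coeff p.2 ψ) := by
  simp only [coeff_mul, map_sum]

theorem coeff_coeff_ofNat_mul (k : ℕ) [k.AtLeastTwo] (φ : R⟦X⟧⟦X⟧) (n f : ℕ) :
    coeff f (coeff n ((no_index (OfNat.ofNat k) : R⟦X⟧⟦X⟧) * φ)) =
      OfNat.ofNat k * coeff f (coeff n φ) := by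
  rw [← map_ofNat C, coeff_C_mul, ← map_ofNat C, coeff_C_mul]

end PowerSeries

namespace CarrellChapuy

theorem eq_of_relations {R : Type*} [CommRing R] {x u A B E G : R}
    (hunit : IsUnit (1 - x * A)) (hE : E = A + x * (A * B))
    (hA : A = u + 2 * (x * B) + x * (A * A)) (hdual : u * E = u * G + x * (B * G))
    (hsum : B + A + G = 3 * E) :
    E = u + 2 * (x * B) + 2 * (x * (u * B)) + 3 * (x ^ 2 * (B * B)) := by
  have hfactor : (A * A + A * B - 2 * (u * B) - 3 * (x * (B * B))) * (1 - x * A) = 0 := by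
    linear_combination -hdual - (u + x * B) * hsum - (2 * u + 3 * x * B) * hE + (A + B) * hA
  linear_combination hE + hA + x * hunit.mul_left_eq_zero.mp hfactor

noncomputable def weightedGF (w Q : ℕ → ℕ → ℚ) : ℚ⟦X⟧⟦X⟧ :=
  mk fun n => mk fun f => w n f * Q n f

@[simp]
theorem coeff_coeff_weightedGF (w Q : ℕ → ℕ → ℚ) (n f : ℕ) :
    coeff f (coeff n (weightedGF w Q)) = w n f * Q n f := by
  simp only [weightedGF, coeff_mk]

theorem sum_ite_eq_coeff_X_pow_mul_weightedGF {Q : ℕ → ℕ → ℚ} (hzero : ∀ n, Q n 0 = 0)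
    (w w' : ℕ → ℕ → ℚ) {s n d K : ℕ} (hd : d < K) (t : ℕ → ℕ → ℕ → ℕ → ℚ)
    (ht : ∀ i j f1 f2, t i j f1 f2 = w i f1 * Q i f1 * (w' j f2 * Q j f2)) :
    ∑ i ∈ range (n + 1), ∑ j ∈ range (n + 1), ∑ f1 ∈ range K, ∑ f2 ∈ range K,
        (if i + j + s = n ∧ f1 + f2 = d ∧ 1 ≤ f1 ∧ 1 ≤ f2 then t i j f1 f2 else 0) =
      coeff d (coeff n (X ^ s * (weightedGF w Q * weightedGF w' Q))) := by
  rw [coeff_X_pow_mul']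
  split_ifs with hs
  · obtain ⟨c, rfl⟩ := Nat.exists_eq_add_of_le' hs
    rw [add_tsub_cancel_right, coeff_coeff_mul]
    refine Eq.trans ?_ (sum_range_sum_range_ite_add_eq_and_add_eq (by omega : c < c + s + 1) hd
      fun i j f1 f2 => coeff f1 (coeff i (weightedGF w Q)) * coeff f2 (coeff j (weightedGF w' Q)))
    refine sum_congr rfl fun i _ => sum_congr rfl fun j _ =>
      sum_congr rfl fun f1 _ => sum_congr rfl fun f2 _ => ?_
    simp only [add_left_inj, coeff_coeff_weightedGF, ht]
    split_ifs with hfull hcore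
    · rfl
    · exact absurd ⟨hfull.1, hfull.2.1⟩ hcore
    · obtain h | h : f1 = 0 ∨ f2 = 0 := by omega
      all_goals simp [h, hzero]
    · rfl
  · exact sum_eq_zero fun i _ => sum_eq_zero fun j _ =>
      sum_eq_zero fun f1 _ => sum_eq_zero fun f2 _ => if_neg (by omega)

section

variable (Q : ℕ → ℕ → ℚ)

noncomputable def vertexGF : ℚ⟦X⟧⟦X⟧ := weightedGF (fun n f => 2 + n - f) Q
noncomputable def oddGF : ℚ⟦X⟧⟦X⟧ := weightedGF (fun n _ => 2 * n + 1) Q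
noncomputable def succEdgeGF : ℚ⟦X⟧⟦X⟧ := weightedGF (fun n _ => n + 1) Q
noncomputable def faceGF : ℚ⟦X⟧⟦X⟧ := weightedGF (fun _ f => f) Q

variable {Q}

theorem csSum_eq_coeff (hzero : ∀ n, Q n 0 = 0) (n f : ℕ) :
    csSum Q n f = coeff f (coeff n (X * (vertexGF Q * oddGF Q))) := by
  rw [← pow_one (X : ℚ⟦X⟧⟦X⟧)]
  exact sum_ite_eq_coeff_X_pow_mul_weightedGF hzero _ _ f.lt_succ_self _ fun _ _ _ _ => by ring

theorem remySum_eq_coeff (hzero : ∀ n, Q n 0 = 0) (n f : ℕ) :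
    remySum Q n f = coeff f (coeff n (X * (vertexGF Q * vertexGF Q))) := by
  rw [← pow_one (X : ℚ⟦X⟧⟦X⟧)]
  exact sum_ite_eq_coeff_X_pow_mul_weightedGF hzero _ _ f.lt_succ_self _ fun _ _ _ _ => by ring

theorem dualSum_eq_coeff (hzero : ∀ n, Q n 0 = 0) (n f : ℕ) :
    dualSum Q n f = coeff (f + 1) (coeff n (X * (oddGF Q * faceGF Q))) := by
  rw [← pow_one (X : ℚ⟦X⟧⟦X⟧)]
  exact sum_ite_eq_coeff_X_pow_mul_weightedGF hzero _ _ (f + 1).lt_succ_self _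
    fun _ _ _ _ => by ring

theorem ccQuad_eq_coeff (hzero : ∀ n, Q n 0 = 0) (n f : ℕ) :
    ccQuad Q n f = coeff f (coeff n (X ^ 2 * (oddGF Q * oddGF Q))) :=
  sum_ite_eq_coeff_X_pow_mul_weightedGF hzero _ _ f.lt_succ_self _ fun _ _ _ _ => by ring

theorem succEdgeGF_eq (hzero : ∀ n, Q n 0 = 0)
    (hcs : ∀ n f : ℕ, 1 ≤ f → ((f : ℚ) - 1) * Q n f = csSum Q n f) :
    succEdgeGF Q = vertexGF Q + X * (vertexGF Q * oddGF Q) := by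
  ext n f
  rw [map_add, map_add, ← csSum_eq_coeff hzero]
  simp only [succEdgeGF, vertexGF, coeff_coeff_weightedGF]
  obtain rfl | hf := f.eq_zero_or_pos
  · simp [hzero, csSum]
  · linear_combination hcs n f hf

theorem vertexGF_eq (hinit : ∀ f, Q 0 f = if f = 1 then 1 else 0) (hzero : ∀ n, Q n 0 = 0)
    (hremy : ∀ n f : ℕ, 1 ≤ n → 1 ≤ f →
      (2 + (n : ℚ) - f) * Q n f = 2 * (2 * (n : ℚ) - 1) * Q (n - 1) f + remySum Q n f) :
    vertexGF Q = C X + 2 * (X * oddGF Q) + X * (vertexGF Q * vertexGF Q) := by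
  ext n f
  rw [map_add, map_add, map_add, map_add, coeff_coeff_ofNat_mul, ← remySum_eq_coeff hzero]
  simp only [vertexGF, oddGF, coeff_coeff_weightedGF]
  rcases n with _ | m
  · by_cases hf : f = 1
    · norm_num [hf, hinit, remySum]
    · simp [hf, hinit, remySum, coeff_C, coeff_X]
  · simp only [coeff_succ_X_mul, coeff_C, Nat.add_one_ne_zero, if_false, map_zero,
      coeff_coeff_weightedGF]
    obtain rfl | hf := f.eq_zero_or_pos
    · simp [hzero, remySum]
    · have h := hremy (m + 1) f (by omega) hf
      rw [Nat.add_sub_cancel] at h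
      push_cast at h ⊢
      linear_combination h

theorem C_X_mul_succEdgeGF_eq (hzero : ∀ n, Q n 0 = 0)
    (hdual : ∀ n f : ℕ, ((n : ℚ) - f + 1) * Q n f = dualSum Q n f) :
    C X * succEdgeGF Q = C X * faceGF Q + X * (oddGF Q * faceGF Q) := by
  ext n f
  rcases f with _ | g
  · rw [map_add, map_add, coeff_C_mul, coeff_C_mul, coeff_zero_X_mul, coeff_zero_X_mul, zero_add]
    rcases n with _ | m
    · rw [coeff_zero_X_mul, map_zero]
    · rw [coeff_succ_X_mul, coeff_coeff_mul]
      simp [faceGF]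
  · rw [map_add, map_add, ← dualSum_eq_coeff hzero]
    simp only [coeff_C_mul, coeff_succ_X_mul, succEdgeGF, faceGF, coeff_coeff_weightedGF]
    linear_combination hdual n g

theorem oddGF_add_vertexGF_add_faceGF :
    oddGF Q + vertexGF Q + faceGF Q = 3 * succEdgeGF Q := by
  ext n f
  simp only [map_add, coeff_coeff_ofNat_mul, oddGF, vertexGF, faceGF, succEdgeGF,
    coeff_coeff_weightedGF]
  ring

end

end CarrellChapuy

open CarrellChapuy

theorem cc_from_cut_slide_remy_dual (Q : ℕ → ℕ → ℚ)
    (hinit : ∀ f, Q 0 f = if f = 1 then 1 else 0)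
    (hzero : ∀ n, Q n 0 = 0)
    (hcs : ∀ (n f : ℕ), 1 ≤ f → ((f : ℚ) - 1) * Q n f = csSum Q n f)
    (hremy : ∀ (n f : ℕ), 1 ≤ n → 1 ≤ f →
      (2 + (n : ℚ) - (f : ℚ)) * Q n f =
        2 * (2 * (n : ℚ) - 1) * Q (n - 1) f + remySum Q n f)
    (hdual : ∀ (n f : ℕ), ((n : ℚ) - (f : ℚ) + 1) * Q n f = dualSum Q n f) :
    ∀ (n f : ℕ), 1 ≤ n → 1 ≤ f →
      ((n : ℚ) + 1) * Q n f =
        2 * (2 * (n : ℚ) - 1) * Q (n - 1) f + 2 * (2 * (n : ℚ) - 1) * Q (n - 1) (f - 1) +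
          3 * ccQuad Q n f := by
  intro n f hn hf
  obtain ⟨m, rfl⟩ := Nat.exists_eq_add_of_le' hn
  obtain ⟨g, rfl⟩ := Nat.exists_eq_add_of_le' hf
  have hseries := eq_of_relations (isUnit_one_sub_X_mul (vertexGF Q))
    (succEdgeGF_eq hzero hcs) (vertexGF_eq hinit hzero hremy)
    (C_X_mul_succEdgeGF_eq hzero hdual) oddGF_add_vertexGF_add_faceGF
  have hcoeff := congrArg (fun φ => coeff (g + 1) (coeff (m + 1) φ)) hseries
  simp only [map_add, coeff_coeff_ofNat_mul, ← ccQuad_eq_coeff hzero] at hcoeff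
  simp only [coeff_succ_X_mul, coeff_C_mul, coeff_C, Nat.add_one_ne_zero, if_false, map_zero,
    succEdgeGF, oddGF, coeff_coeff_weightedGF] at hcoeff
  simp only [Nat.add_sub_cancel]
  push_cast at hcoeff ⊢
  linear_combination hcoeff
end

section
/- Let α : ℕ → ℕ → ℚ and T : ℕ → ℚ satisfy: (i) support condition: α(n,f) ≠ 0 implies there exists l ≥ 0 with n = 3f + 2l − 4; (ii) T(m) = α(3m+2, m+2) for all m ≥ 0; (iii) marked-leaf relation: defining α¹(n,f) := 2(n−2)·α(n−2,f) for n ≥ 3, α¹(1,1) := 1, and α¹(n,f) := 0 otherwise; (iv) the precubic cut-and-slide formula: for all n, f, (f−1)·α(n,f) = Σ_{i+j=n, i,j≥0} Σ_{f1+f2=f, f1,f2≥1} α¹(i,f1)·α¹(j,f2). Then T satisfies the planar Goulden–Jackson recurrence: for all m ≥ 1, (m+1)·T(m) = 4(3m−1)·T(m−1) + 4·Σ_{p+q=m−2, p,q≥0} (3p+2)(3q+2)·T(p)·T(q). -/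
lemma sum4_single (N M a b c d : ℕ) (ha : a < N) (hb : b < N) (hc : c < M) (hd : d < M) (v : ℚ) :
    (∑ i ∈ Finset.range N, ∑ j ∈ Finset.range N, ∑ f1 ∈ Finset.range M, ∑ f2 ∈ Finset.range M,
      if i = a ∧ j = b ∧ f1 = c ∧ f2 = d then v else 0) = v := by
  rw [Finset.sum_eq_single_of_mem a (Finset.mem_range.2 ha)]
  · rw [Finset.sum_eq_single_of_mem b (Finset.mem_range.2 hb)]
    · rw [Finset.sum_eq_single_of_mem c (Finset.mem_range.2 hc)]
      · simp [Finset.sum_ite_eq', hd]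
      · intro x _ hx; simp [hx]
    · intro x _ hx; simp [hx]
  · intro x _ hx; simp [hx]

lemma sum2_pair (N a b : ℕ) (P : Prop) [Decidable P] (haP : P → a < N) (hbP : P → b < N) (v : ℚ) :
    (∑ i ∈ Finset.range N, ∑ j ∈ Finset.range N, if i = a ∧ j = b ∧ P then v else 0)
      = if P then v else 0 := by
  by_cases hP : P
  · rw [if_pos hP, Finset.sum_eq_single_of_mem a (Finset.mem_range.2 (haP hP))]
    · simp [hP, Finset.sum_ite_eq', hbP hP]
    · intro x _ hx; simp [hx]
  · simp [hP]

lemma comm4 (s t u v : Finset ℕ) (g : ℕ → ℕ → ℕ → ℕ → ℚ) :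
    (∑ i ∈ s, ∑ j ∈ t, ∑ a ∈ u, ∑ b ∈ v, g i j a b)
    = ∑ a ∈ u, ∑ b ∈ v, ∑ i ∈ s, ∑ j ∈ t, g i j a b := by
  trans ∑ i ∈ s, ∑ a ∈ u, ∑ b ∈ v, ∑ j ∈ t, g i j a b
  · refine Finset.sum_congr rfl fun i _ => ?_
    rw [Finset.sum_comm]
    exact Finset.sum_congr rfl fun a _ => Finset.sum_comm
  · rw [Finset.sum_comm]
    exact Finset.sum_congr rfl fun a _ => Finset.sum_comm

lemma shift1 (k : ℕ) (g : ℕ → ℚ) (h0 : g 0 = 0) (h1 : g 1 = 0) :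
    ∑ x ∈ Finset.range (k + 2), g x = ∑ x ∈ Finset.range k, g (x + 2) := by
  rw [Finset.sum_range_succ', Finset.sum_range_succ', h0, h1, add_zero, add_zero]

/-- `Σ_{p+q=m−2, p,q≥0} (3p+2)(3q+2)·T(p)·T(q)`, the quadratic term of the planar
Goulden–Jackson recurrence. -/
def gjQuad (T : ℕ → ℚ) (m : ℕ) : ℚ :=
  ∑ p ∈ Finset.range (m + 1), ∑ q ∈ Finset.range (m + 1),
    if p + q + 2 = m then (3 * (p : ℚ) + 2) * (3 * (q : ℚ) + 2) * T p * T q else 0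

theorem goulden_jackson_planar_from_precubic (α : ℕ → ℕ → ℚ) (T : ℕ → ℚ)
    (A : ℕ → ℕ → ℚ)
    (hsupp : ∀ (n f : ℕ), α n f ≠ 0 → ∃ l : ℕ, (n : ℤ) = 3 * f + 2 * l - 4)
    (hT : ∀ m : ℕ, T m = α (3 * m + 2) (m + 2))
    (hA : ∀ (n f : ℕ), A n f =
      if 3 ≤ n then 2 * ((n : ℚ) - 2) * α (n - 2) f
      else if n = 1 ∧ f = 1 then 1 else 0)
    (hcs : ∀ (n f : ℕ), ((f : ℚ) - 1) * α n f =
      ∑ i ∈ Finset.range (n + 1), ∑ j ∈ Finset.range (n + 1),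
        ∑ f1 ∈ Finset.range (f + 1), ∑ f2 ∈ Finset.range (f + 1),
          if i + j = n ∧ f1 + f2 = f ∧ 1 ≤ f1 ∧ 1 ≤ f2 then A i f1 * A j f2 else 0) :
    ∀ m : ℕ, 1 ≤ m →
      ((m : ℚ) + 1) * T m = 4 * (3 * (m : ℚ) - 1) * T (m - 1) + 4 * gjQuad T m := by
  intro m hm
  have hT' : T (m - 1) = α (3 * m - 1) (m + 1) := by
    rw [hT (m - 1)]; congr 1 <;> omega
  have key : ∀ i j f1 f2 : ℕ,
      (if i + j = 3 * m + 2 ∧ f1 + f2 = m + 2 ∧ 1 ≤ f1 ∧ 1 ≤ f2 then A i f1 * A j f2 else 0)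
      = ((if i = 1 ∧ j = 3 * m + 1 ∧ f1 = 1 ∧ f2 = m + 1 then
            2 * (3 * (m : ℚ) - 1) * T (m - 1) else 0)
        + (if i = 3 * m + 1 ∧ j = 1 ∧ f1 = m + 1 ∧ f2 = 1 then
            2 * (3 * (m : ℚ) - 1) * T (m - 1) else 0)
        + (if i = 3 * f1 - 2 ∧ j = 3 * f2 - 2 ∧ (2 ≤ f1 ∧ 2 ≤ f2 ∧ f1 + f2 = m + 2) then
            4 * (3 * ((f1 - 2 : ℕ) : ℚ) + 2) * (3 * ((f2 - 2 : ℕ) : ℚ) + 2)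
              * T (f1 - 2) * T (f2 - 2) else 0)) := by
    intro i j f1 f2
    by_cases hC : i + j = 3 * m + 2 ∧ f1 + f2 = m + 2 ∧ 1 ≤ f1 ∧ 1 ≤ f2
    · obtain ⟨hij, hf, hf1, hf2⟩ := hC
      rw [if_pos ⟨hij, hf, hf1, hf2⟩]
      by_cases hi : 3 ≤ i
      · by_cases hj : 3 ≤ j
        · rw [hA i f1, hA j f2, if_pos hi, if_pos hj]
          have n1 : ¬(i = 1 ∧ j = 3 * m + 1 ∧ f1 = 1 ∧ f2 = m + 1) := by intro h; omega
          have n2 : ¬(i = 3 * m + 1 ∧ j = 1 ∧ f1 = m + 1 ∧ f2 = 1) := by intro h; omega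
          rw [if_neg n1, if_neg n2]
          by_cases hz : α (i - 2) f1 = 0 ∨ α (j - 2) f2 = 0
          · have hL : 2 * ((i : ℚ) - 2) * α (i - 2) f1 * (2 * ((j : ℚ) - 2) * α (j - 2) f2) = 0 := by
              rcases hz with h | h <;> rw [h] <;> ring
            rw [hL]
            by_cases ht : i = 3 * f1 - 2 ∧ j = 3 * f2 - 2 ∧ (2 ≤ f1 ∧ 2 ≤ f2 ∧ f1 + f2 = m + 2)
            · rw [if_pos ht]
              have e1 : T (f1 - 2) = α (i - 2) f1 := by rw [hT]; congr 1 <;> omega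
              have e2 : T (f2 - 2) = α (j - 2) f2 := by rw [hT]; congr 1 <;> omega
              rw [e1, e2]; rcases hz with h | h <;> rw [h] <;> ring
            · rw [if_neg ht]; ring
          · push_neg at hz
            obtain ⟨hz1, hz2⟩ := hz
            obtain ⟨l1, hl1⟩ := hsupp _ _ hz1
            obtain ⟨l2, hl2⟩ := hsupp _ _ hz2
            have hii : i = 3 * f1 - 2 ∧ j = 3 * f2 - 2 ∧ 2 ≤ f1 ∧ 2 ≤ f2 := by omega
            rw [if_pos ⟨hii.1, hii.2.1, hii.2.2.1, hii.2.2.2, hf⟩]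
            have e1 : T (f1 - 2) = α (i - 2) f1 := by rw [hT]; congr 1 <;> omega
            have e2 : T (f2 - 2) = α (j - 2) f2 := by rw [hT]; congr 1 <;> omega
            rw [e1, e2]
            have hi' : i = 3 * (f1 - 2) + 4 := by omega
            have hj' : j = 3 * (f2 - 2) + 4 := by omega
            rw [hi', hj']
            push_cast
            ring
        · rw [hA j f2, if_neg hj]
          by_cases hj1 : j = 1 ∧ f2 = 1
          · rw [if_pos hj1]
            obtain ⟨hj1', hf21⟩ := hj1
            have n1 : ¬(i = 1 ∧ j = 3 * m + 1 ∧ f1 = 1 ∧ f2 = m + 1) := by intro h; omega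
            have n3 : ¬(i = 3 * f1 - 2 ∧ j = 3 * f2 - 2 ∧ (2 ≤ f1 ∧ 2 ≤ f2 ∧ f1 + f2 = m + 2)) := by
              intro h; omega
            have hi' : i = 3 * m + 1 := by omega
            have hf1' : f1 = m + 1 := by omega
            rw [if_neg n1, if_neg n3, if_pos ⟨hi', hj1', hf1', hf21⟩]
            rw [hA i f1, if_pos hi, hT']
            have e : i - 2 = 3 * m - 1 := by omega
            rw [e, hf1', hi']
            push_cast
            ring
          · rw [if_neg hj1]
            have n1 : ¬(i = 1 ∧ j = 3 * m + 1 ∧ f1 = 1 ∧ f2 = m + 1) := by intro h; omega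
            have n2 : ¬(i = 3 * m + 1 ∧ j = 1 ∧ f1 = m + 1 ∧ f2 = 1) := by
              intro h; exact hj1 ⟨h.2.1, h.2.2.2⟩
            have n3 : ¬(i = 3 * f1 - 2 ∧ j = 3 * f2 - 2 ∧ (2 ≤ f1 ∧ 2 ≤ f2 ∧ f1 + f2 = m + 2)) := by
              intro h; omega
            rw [if_neg n1, if_neg n2, if_neg n3]; ring
      · rw [hA i f1, if_neg hi]
        by_cases hi1 : i = 1 ∧ f1 = 1
        · rw [if_pos hi1]
          obtain ⟨hi1', hf11⟩ := hi1
          have hj' : j = 3 * m + 1 := by omega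
          have hf2' : f2 = m + 1 := by omega
          have hj3 : 3 ≤ j := by omega
          have n2 : ¬(i = 3 * m + 1 ∧ j = 1 ∧ f1 = m + 1 ∧ f2 = 1) := by intro h; omega
          have n3 : ¬(i = 3 * f1 - 2 ∧ j = 3 * f2 - 2 ∧ (2 ≤ f1 ∧ 2 ≤ f2 ∧ f1 + f2 = m + 2)) := by
            intro h; omega
          rw [if_neg n2, if_neg n3, if_pos ⟨hi1', hj', hf11, hf2'⟩]
          rw [hA j f2, if_pos hj3, hT']
          have e : j - 2 = 3 * m - 1 := by omega
          rw [e, hf2', hj']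
          push_cast
          ring
        · rw [if_neg hi1]
          have n1 : ¬(i = 1 ∧ j = 3 * m + 1 ∧ f1 = 1 ∧ f2 = m + 1) := by
            intro h; exact hi1 ⟨h.1, h.2.2.1⟩
          have n2 : ¬(i = 3 * m + 1 ∧ j = 1 ∧ f1 = m + 1 ∧ f2 = 1) := by intro h; omega
          have n3 : ¬(i = 3 * f1 - 2 ∧ j = 3 * f2 - 2 ∧ (2 ≤ f1 ∧ 2 ≤ f2 ∧ f1 + f2 = m + 2)) := by
            intro h; omega
          rw [if_neg n1, if_neg n2, if_neg n3]; ring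
    · rw [if_neg hC]
      have n1 : ¬(i = 1 ∧ j = 3 * m + 1 ∧ f1 = 1 ∧ f2 = m + 1) := fun h => hC (by omega)
      have n2 : ¬(i = 3 * m + 1 ∧ j = 1 ∧ f1 = m + 1 ∧ f2 = 1) := fun h => hC (by omega)
      have n3 : ¬(i = 3 * f1 - 2 ∧ j = 3 * f2 - 2 ∧ (2 ≤ f1 ∧ 2 ≤ f2 ∧ f1 + f2 = m + 2)) :=
        fun h => hC (by omega)
      rw [if_neg n1, if_neg n2, if_neg n3]; ring
  -- assemble
  have h := hcs (3 * m + 2) (m + 2)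
  rw [show (∑ i ∈ Finset.range (3 * m + 2 + 1), ∑ j ∈ Finset.range (3 * m + 2 + 1),
        ∑ f1 ∈ Finset.range (m + 2 + 1), ∑ f2 ∈ Finset.range (m + 2 + 1),
          if i + j = 3 * m + 2 ∧ f1 + f2 = m + 2 ∧ 1 ≤ f1 ∧ 1 ≤ f2
          then A i f1 * A j f2 else 0)
      = 2 * (3 * (m : ℚ) - 1) * T (m - 1) + 2 * (3 * (m : ℚ) - 1) * T (m - 1)
        + 4 * gjQuad T m from ?_] at h
  · rw [hT m]
    push_cast at h ⊢
    linear_combination h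
  · calc (∑ i ∈ Finset.range (3 * m + 2 + 1), ∑ j ∈ Finset.range (3 * m + 2 + 1),
        ∑ f1 ∈ Finset.range (m + 2 + 1), ∑ f2 ∈ Finset.range (m + 2 + 1),
          if i + j = 3 * m + 2 ∧ f1 + f2 = m + 2 ∧ 1 ≤ f1 ∧ 1 ≤ f2
          then A i f1 * A j f2 else 0)
        = ∑ i ∈ Finset.range (3 * m + 2 + 1), ∑ j ∈ Finset.range (3 * m + 2 + 1),
        ∑ f1 ∈ Finset.range (m + 2 + 1), ∑ f2 ∈ Finset.range (m + 2 + 1),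
          ((if i = 1 ∧ j = 3 * m + 1 ∧ f1 = 1 ∧ f2 = m + 1 then
            2 * (3 * (m : ℚ) - 1) * T (m - 1) else 0)
        + (if i = 3 * m + 1 ∧ j = 1 ∧ f1 = m + 1 ∧ f2 = 1 then
            2 * (3 * (m : ℚ) - 1) * T (m - 1) else 0)
        + (if i = 3 * f1 - 2 ∧ j = 3 * f2 - 2 ∧ (2 ≤ f1 ∧ 2 ≤ f2 ∧ f1 + f2 = m + 2) then
            4 * (3 * ((f1 - 2 : ℕ) : ℚ) + 2) * (3 * ((f2 - 2 : ℕ) : ℚ) + 2)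
              * T (f1 - 2) * T (f2 - 2) else 0)) := by
          exact Finset.sum_congr rfl fun i _ => Finset.sum_congr rfl fun j _ =>
            Finset.sum_congr rfl fun f1 _ => Finset.sum_congr rfl fun f2 _ => key i j f1 f2
      _ = 2 * (3 * (m : ℚ) - 1) * T (m - 1) + 2 * (3 * (m : ℚ) - 1) * T (m - 1)
        + 4 * gjQuad T m := by
        simp only [Finset.sum_add_distrib]
        congr 1
        · congr 1
          · exact sum4_single _ _ _ _ _ _ (by omega) (by omega) (by omega) (by omega) _
          · exact sum4_single _ _ _ _ _ _ (by omega) (by omega) (by omega) (by omega) _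
        · rw [comm4]
          calc (∑ f1 ∈ Finset.range (m + 2 + 1), ∑ f2 ∈ Finset.range (m + 2 + 1),
              ∑ i ∈ Finset.range (3 * m + 2 + 1), ∑ j ∈ Finset.range (3 * m + 2 + 1),
                if i = 3 * f1 - 2 ∧ j = 3 * f2 - 2 ∧ (2 ≤ f1 ∧ 2 ≤ f2 ∧ f1 + f2 = m + 2) then
                  4 * (3 * ((f1 - 2 : ℕ) : ℚ) + 2) * (3 * ((f2 - 2 : ℕ) : ℚ) + 2)
                    * T (f1 - 2) * T (f2 - 2) else 0)
              = ∑ f1 ∈ Finset.range (m + 2 + 1), ∑ f2 ∈ Finset.range (m + 2 + 1),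
                (if 2 ≤ f1 ∧ 2 ≤ f2 ∧ f1 + f2 = m + 2 then
                  4 * (3 * ((f1 - 2 : ℕ) : ℚ) + 2) * (3 * ((f2 - 2 : ℕ) : ℚ) + 2)
                    * T (f1 - 2) * T (f2 - 2) else 0) := by
                exact Finset.sum_congr rfl fun f1 _ => Finset.sum_congr rfl fun f2 _ =>
                  sum2_pair _ _ _ _ (fun hP => by omega) (fun hP => by omega) _
              _ = 4 * gjQuad T m := by
                rw [show m + 2 + 1 = m + 1 + 2 by omega]
                rw [shift1 (m + 1)
                  (fun f1 => ∑ f2 ∈ Finset.range (m + 1 + 2),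
                    (if 2 ≤ f1 ∧ 2 ≤ f2 ∧ f1 + f2 = m + 2 then
                      4 * (3 * ((f1 - 2 : ℕ) : ℚ) + 2) * (3 * ((f2 - 2 : ℕ) : ℚ) + 2)
                        * T (f1 - 2) * T (f2 - 2) else 0))
                  (by simp) (by simp)]
                rw [gjQuad, Finset.mul_sum]
                refine Finset.sum_congr rfl fun p _ => ?_
                rw [shift1 (m + 1)
                  (fun f2 => if 2 ≤ p + 2 ∧ 2 ≤ f2 ∧ p + 2 + f2 = m + 2 then
                      4 * (3 * ((p + 2 - 2 : ℕ) : ℚ) + 2) * (3 * ((f2 - 2 : ℕ) : ℚ) + 2)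
                        * T (p + 2 - 2) * T (f2 - 2) else 0)
                  (by simp) (by simp)]
                rw [Finset.mul_sum]
                refine Finset.sum_congr rfl fun q _ => ?_
                simp only [Nat.add_sub_cancel]
                have hcond : (2 ≤ p + 2 ∧ 2 ≤ q + 2 ∧ p + 2 + (q + 2) = m + 2) ↔ p + q + 2 = m := by
                  omega
                by_cases hpq : p + q + 2 = m
                · rw [if_pos (hcond.mpr hpq), if_pos hpq]; ring
                · rw [if_neg (fun hh => hpq (hcond.mp hh)), if_neg hpq]; ring
end

section
/- Let n ≥ 1 and f ≥ 1, and let Q : ℕ → ℕ → ℚ satisfy both the cut-and-slide formula (f'−1)·Q(n',f') = Σ_{i+j=n'−1} Σ_{f1+f2=f', f1,f2≥1} (2+i−f1)·Q(i,f1)·(2j+1)·Q(j,f2) for all n', f', and the generalized Rémy formula (2+n'−f')·Q(n',f') = 2(2n'−1)·Q(n'−1,f') + Σ_{i+j=n'−1} Σ_{f1+f2=f', f1,f2≥1} (2+i−f1)·Q(i,f1)·(2+j−f2)·Q(j,f2) for all n' ≥ 1, f' ≥ 1. Then: (f−1)·Q(n,f) = (2n−1)·Q(n−1,f−1) + 2·Σ_{i+j=n−2}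 Σ_{f1+f2=f, f1,f2≥1} (2i+1)·Q(i,f1)·(2j+1)·Q(j,f2) + Σ_{i+j=n−1} Σ_{f1+f2=f, f1,f2≥1} (f1−1)·Q(i,f1)·(2+j−f2)·Q(j,f2). -/
section CSRHelpers

open Finset

/-- helper: a sum over a 4-fold product box equals the nested sum. -/
def Box (n f : ℕ) : Finset (ℕ × ℕ × ℕ × ℕ) :=
  range (n+1) ×ˢ range (n+1) ×ˢ range (f+1) ×ˢ range (f+1)

lemma sum_Box (n f : ℕ) (F : ℕ → ℕ → ℕ → ℕ → ℚ) :
    ∑ p ∈ Box n f, F p.1 p.2.1 p.2.2.1 p.2.2.2 =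
    ∑ i ∈ range (n+1), ∑ j ∈ range (n+1), ∑ f1 ∈ range (f+1), ∑ f2 ∈ range (f+1),
      F i j f1 f2 := by
  simp [Box, Finset.sum_product]

def Box6 (n f : ℕ) : Finset (ℕ × ℕ × ℕ × ℕ × ℕ × ℕ) :=
  range (n+1) ×ˢ range (n+1) ×ˢ range (n+1) ×ˢ range (f+1) ×ˢ range (f+1) ×ˢ range (f+1)

lemma sum_Box6 (n f : ℕ) (F : ℕ → ℕ → ℕ → ℕ → ℕ → ℕ → ℚ) :
    ∑ p ∈ Box6 n f, F p.1 p.2.1 p.2.2.1 p.2.2.2.1 p.2.2.2.2.1 p.2.2.2.2.2 =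
    ∑ a ∈ range (n+1), ∑ b ∈ range (n+1), ∑ j ∈ range (n+1),
      ∑ g1 ∈ range (f+1), ∑ g2 ∈ range (f+1), ∑ f2 ∈ range (f+1),
        F a b j g1 g2 f2 := by
  simp [Box6, Finset.sum_product]

/-- extend the upper limit of a range-sum whose terms vanish above `m`. -/
lemma extend1 {g : ℕ → ℚ} {m N : ℕ} (hm : m ≤ N) (hz : ∀ a, m < a → g a = 0) :
    ∑ a ∈ range (m+1), g a = ∑ a ∈ range (N+1), g a := by
  apply Finset.sum_subset (Finset.range_subset_range.2 (by omega))
  intro x hx hx'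
  simp only [Finset.mem_range] at hx hx'
  exact hz x (by omega)

lemma remySum_extend (Q : ℕ → ℕ → ℚ) {m g N M : ℕ} (hm : m ≤ N) (hg : g ≤ M) :
    remySum Q m g =
    ∑ a ∈ range (N+1), ∑ b ∈ range (N+1), ∑ c ∈ range (M+1), ∑ d ∈ range (M+1),
      if a + b + 1 = m ∧ c + d = g ∧ 1 ≤ c ∧ 1 ≤ d then
        (2 + (a : ℚ) - (c : ℚ)) * Q a c * (2 + (b : ℚ) - (d : ℚ)) * Q b d
      else 0 := by
  rw [remySum]
  rw [extend1 hm (fun a ha => Finset.sum_eq_zero fun b _ => Finset.sum_eq_zero fun c _ =>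
    Finset.sum_eq_zero fun d _ => if_neg (by omega))]
  refine Finset.sum_congr rfl fun a _ => ?_
  rw [extend1 hm (fun b hb => Finset.sum_eq_zero fun c _ =>
    Finset.sum_eq_zero fun d _ => if_neg (by omega))]
  refine Finset.sum_congr rfl fun b _ => ?_
  rw [extend1 hg (fun c hc => Finset.sum_eq_zero fun d _ => if_neg (by omega))]
  refine Finset.sum_congr rfl fun c _ => ?_
  rw [extend1 hg (fun d hd => if_neg (by omega))]

lemma csSum_extend (Q : ℕ → ℕ → ℚ) {m g N M : ℕ} (hm : m ≤ N) (hg : g ≤ M) :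
    csSum Q m g =
    ∑ a ∈ range (N+1), ∑ b ∈ range (N+1), ∑ c ∈ range (M+1), ∑ d ∈ range (M+1),
      if a + b + 1 = m ∧ c + d = g ∧ 1 ≤ c ∧ 1 ≤ d then
        (2 + (a : ℚ) - (c : ℚ)) * Q a c * (2 * (b : ℚ) + 1) * Q b d
      else 0 := by
  rw [csSum]
  rw [extend1 hm (fun a ha => Finset.sum_eq_zero fun b _ => Finset.sum_eq_zero fun c _ =>
    Finset.sum_eq_zero fun d _ => if_neg (by omega))]
  refine Finset.sum_congr rfl fun a _ => ?_
  rw [extend1 hm (fun b hb => Finset.sum_eq_zero fun c _ =>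
    Finset.sum_eq_zero fun d _ => if_neg (by omega))]
  refine Finset.sum_congr rfl fun b _ => ?_
  rw [extend1 hg (fun c hc => Finset.sum_eq_zero fun d _ => if_neg (by omega))]
  refine Finset.sum_congr rfl fun c _ => ?_
  rw [extend1 hg (fun d hd => if_neg (by omega))]

lemma ite_mul_sum4 (P : Prop) [Decidable P] {s t u v : Finset ℕ}
    (C : ℕ → ℕ → ℕ → ℕ → Prop) [∀ a b x y, Decidable (C a b x y)]
    (T : ℕ → ℕ → ℕ → ℕ → ℚ) (c : ℚ) :
    (if P then (∑ a ∈ s, ∑ b ∈ t, ∑ x ∈ u, ∑ y ∈ v,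
        if C a b x y then T a b x y else 0) * c else 0)
    = ∑ a ∈ s, ∑ b ∈ t, ∑ x ∈ u, ∑ y ∈ v,
        if P ∧ C a b x y then T a b x y * c else 0 := by
  split_ifs with h
  · simp [Finset.sum_mul, ite_mul, h]
  · simp [h]

def midSum (Q : ℕ → ℕ → ℚ) (n f : ℕ) : ℚ :=
  ∑ a ∈ range (n+1), ∑ b ∈ range (n+1), ∑ j ∈ range (n+1),
    ∑ g1 ∈ range (f+1), ∑ g2 ∈ range (f+1), ∑ f2 ∈ range (f+1),
      if a + b + j + 2 = n ∧ g1 + g2 + f2 = f ∧ 1 ≤ g1 ∧ 1 ≤ g2 ∧ 1 ≤ f2 then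
        (2 + (a : ℚ) - (g1 : ℚ)) * Q a g1 * (2 + (b : ℚ) - (g2 : ℚ)) * Q b g2 *
          (2 * (j : ℚ) + 1) * Q j f2
      else 0

lemma keyA (Q : ℕ → ℕ → ℚ) (n f : ℕ) :
    (∑ i ∈ range (n+1), ∑ j ∈ range (n+1), ∑ f1 ∈ range (f+1), ∑ f2 ∈ range (f+1),
      if (i + j + 1 = n ∧ f1 + f2 = f ∧ 1 ≤ f1 ∧ 1 ≤ f2) ∧ 1 ≤ i then
        remySum Q i f1 * ((2 * (j : ℚ) + 1) * Q j f2) else 0)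
    = midSum Q n f := by
  have step1 :
      (∑ i ∈ range (n+1), ∑ j ∈ range (n+1), ∑ f1 ∈ range (f+1), ∑ f2 ∈ range (f+1),
        if (i + j + 1 = n ∧ f1 + f2 = f ∧ 1 ≤ f1 ∧ 1 ≤ f2) ∧ 1 ≤ i then
          remySum Q i f1 * ((2 * (j : ℚ) + 1) * Q j f2) else 0)
      = ∑ p ∈ Box n f, ∑ q ∈ Box n f,
          if ((p.1 + p.2.1 + 1 = n ∧ p.2.2.1 + p.2.2.2 = f ∧ 1 ≤ p.2.2.1 ∧ 1 ≤ p.2.2.2)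
              ∧ 1 ≤ p.1) ∧
             (q.1 + q.2.1 + 1 = p.1 ∧ q.2.2.1 + q.2.2.2 = p.2.2.1 ∧ 1 ≤ q.2.2.1 ∧ 1 ≤ q.2.2.2)
          then (2 + (q.1 : ℚ) - (q.2.2.1 : ℚ)) * Q q.1 q.2.2.1 *
                 (2 + (q.2.1 : ℚ) - (q.2.2.2 : ℚ)) * Q q.2.1 q.2.2.2 *
                 ((2 * (p.2.1 : ℚ) + 1) * Q p.2.1 p.2.2.2)
          else 0 := by
    rw [← sum_Box n f (fun i j f1 f2 =>
      if (i + j + 1 = n ∧ f1 + f2 = f ∧ 1 ≤ f1 ∧ 1 ≤ f2) ∧ 1 ≤ i then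
        remySum Q i f1 * ((2 * (j : ℚ) + 1) * Q j f2) else 0)]
    refine Finset.sum_congr rfl fun p hp => ?_
    simp only [Box, Finset.mem_product, Finset.mem_range] at hp
    rw [remySum_extend Q (show p.1 ≤ n by omega) (show p.2.2.1 ≤ f by omega),
        ite_mul_sum4]
    rw [← sum_Box n f (fun a b c d =>
      if ((p.1 + p.2.1 + 1 = n ∧ p.2.2.1 + p.2.2.2 = f ∧ 1 ≤ p.2.2.1 ∧ 1 ≤ p.2.2.2)
           ∧ 1 ≤ p.1) ∧
          (a + b + 1 = p.1 ∧ c + d = p.2.2.1 ∧ 1 ≤ c ∧ 1 ≤ d) then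
        (2 + (a : ℚ) - (c : ℚ)) * Q a c * (2 + (b : ℚ) - (d : ℚ)) * Q b d *
          ((2 * (p.2.1 : ℚ) + 1) * Q p.2.1 p.2.2.2)
      else 0)]
  rw [step1, ← Finset.sum_product']
  have step2 : midSum Q n f
      = ∑ w ∈ (Box6 n f).filter (fun w =>
          w.1 + w.2.1 + w.2.2.1 + 2 = n ∧ w.2.2.2.1 + w.2.2.2.2.1 + w.2.2.2.2.2 = f ∧
          1 ≤ w.2.2.2.1 ∧ 1 ≤ w.2.2.2.2.1 ∧ 1 ≤ w.2.2.2.2.2),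
          (2 + (w.1 : ℚ) - (w.2.2.2.1 : ℚ)) * Q w.1 w.2.2.2.1 *
            (2 + (w.2.1 : ℚ) - (w.2.2.2.2.1 : ℚ)) * Q w.2.1 w.2.2.2.2.1 *
            (2 * (w.2.2.1 : ℚ) + 1) * Q w.2.2.1 w.2.2.2.2.2 := by
    rw [Finset.sum_filter]
    unfold midSum
    exact (sum_Box6 n f (fun a b j g1 g2 f2 =>
      if a + b + j + 2 = n ∧ g1 + g2 + f2 = f ∧ 1 ≤ g1 ∧ 1 ≤ g2 ∧ 1 ≤ f2 then
        (2 + (a : ℚ) - (g1 : ℚ)) * Q a g1 * (2 + (b : ℚ) - (g2 : ℚ)) * Q b g2 *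
          (2 * (j : ℚ) + 1) * Q j f2
      else 0)).symm
  rw [step2, ← Finset.sum_filter]
  refine Finset.sum_nbij' (fun r => (r.2.1, r.2.2.1, r.1.2.1, r.2.2.2.1, r.2.2.2.2, r.1.2.2.2))
    (fun w => ((w.1 + w.2.1 + 1, w.2.2.1, w.2.2.2.1 + w.2.2.2.2.1, w.2.2.2.2.2),
               (w.1, w.2.1, w.2.2.2.1, w.2.2.2.2.1))) ?_ ?_ ?_ ?_ ?_
  · rintro ⟨⟨i,j,f1,f2⟩,⟨a,b,g1,g2⟩⟩ hr
    simp only [Box, Box6, Finset.mem_filter, Finset.mem_product, Finset.mem_range, true_and, and_true] at hr ⊢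
    omega
  · rintro ⟨a,b,j,g1,g2,f2⟩ hw
    simp only [Box, Box6, Finset.mem_filter, Finset.mem_product, Finset.mem_range] at hw ⊢
    exact ⟨by omega, by omega, trivial, trivial, by omega, by omega⟩
  · rintro ⟨⟨i,j,f1,f2⟩,⟨a,b,g1,g2⟩⟩ hr
    simp only [Box, Box6, Finset.mem_filter, Finset.mem_product, Finset.mem_range] at hr
    simp only [Prod.mk.injEq, and_true, true_and, eq_self_iff_true]
    omega
  · rintro ⟨a,b,j,g1,g2,f2⟩ hw
    rfl
  · rintro ⟨⟨i,j,f1,f2⟩,⟨a,b,g1,g2⟩⟩ hr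
    ring

lemma keyB (Q : ℕ → ℕ → ℚ) (n f : ℕ) :
    (∑ i ∈ range (n+1), ∑ j ∈ range (n+1), ∑ f1 ∈ range (f+1), ∑ f2 ∈ range (f+1),
      if i + j + 1 = n ∧ f1 + f2 = f ∧ 1 ≤ f1 ∧ 1 ≤ f2 then
        csSum Q i f1 * ((2 + (j : ℚ) - (f2 : ℚ)) * Q j f2) else 0)
    = midSum Q n f := by
  have step1 :
      (∑ i ∈ range (n+1), ∑ j ∈ range (n+1), ∑ f1 ∈ range (f+1), ∑ f2 ∈ range (f+1),
        if i + j + 1 = n ∧ f1 + f2 = f ∧ 1 ≤ f1 ∧ 1 ≤ f2 then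
          csSum Q i f1 * ((2 + (j : ℚ) - (f2 : ℚ)) * Q j f2) else 0)
      = ∑ p ∈ Box n f, ∑ q ∈ Box n f,
          if (p.1 + p.2.1 + 1 = n ∧ p.2.2.1 + p.2.2.2 = f ∧ 1 ≤ p.2.2.1 ∧ 1 ≤ p.2.2.2) ∧
             (q.1 + q.2.1 + 1 = p.1 ∧ q.2.2.1 + q.2.2.2 = p.2.2.1 ∧ 1 ≤ q.2.2.1 ∧ 1 ≤ q.2.2.2)
          then (2 + (q.1 : ℚ) - (q.2.2.1 : ℚ)) * Q q.1 q.2.2.1 *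
                 (2 * (q.2.1 : ℚ) + 1) * Q q.2.1 q.2.2.2 *
                 ((2 + (p.2.1 : ℚ) - (p.2.2.2 : ℚ)) * Q p.2.1 p.2.2.2)
          else 0 := by
    rw [← sum_Box n f (fun i j f1 f2 =>
      if i + j + 1 = n ∧ f1 + f2 = f ∧ 1 ≤ f1 ∧ 1 ≤ f2 then
        csSum Q i f1 * ((2 + (j : ℚ) - (f2 : ℚ)) * Q j f2) else 0)]
    refine Finset.sum_congr rfl fun p hp => ?_
    simp only [Box, Finset.mem_product, Finset.mem_range] at hp
    rw [csSum_extend Q (show p.1 ≤ n by omega) (show p.2.2.1 ≤ f by omega),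
        ite_mul_sum4]
    rw [← sum_Box n f (fun a b c d =>
      if (p.1 + p.2.1 + 1 = n ∧ p.2.2.1 + p.2.2.2 = f ∧ 1 ≤ p.2.2.1 ∧ 1 ≤ p.2.2.2) ∧
          (a + b + 1 = p.1 ∧ c + d = p.2.2.1 ∧ 1 ≤ c ∧ 1 ≤ d) then
        (2 + (a : ℚ) - (c : ℚ)) * Q a c * (2 * (b : ℚ) + 1) * Q b d *
          ((2 + (p.2.1 : ℚ) - (p.2.2.2 : ℚ)) * Q p.2.1 p.2.2.2)
      else 0)]
  have step2 : midSum Q n f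
      = ∑ w ∈ (Box6 n f).filter (fun w =>
          w.1 + w.2.1 + w.2.2.1 + 2 = n ∧ w.2.2.2.1 + w.2.2.2.2.1 + w.2.2.2.2.2 = f ∧
          1 ≤ w.2.2.2.1 ∧ 1 ≤ w.2.2.2.2.1 ∧ 1 ≤ w.2.2.2.2.2),
          (2 + (w.1 : ℚ) - (w.2.2.2.1 : ℚ)) * Q w.1 w.2.2.2.1 *
            (2 + (w.2.1 : ℚ) - (w.2.2.2.2.1 : ℚ)) * Q w.2.1 w.2.2.2.2.1 *
            (2 * (w.2.2.1 : ℚ) + 1) * Q w.2.2.1 w.2.2.2.2.2 := by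
    rw [Finset.sum_filter]
    unfold midSum
    exact (sum_Box6 n f (fun a b j g1 g2 f2 =>
      if a + b + j + 2 = n ∧ g1 + g2 + f2 = f ∧ 1 ≤ g1 ∧ 1 ≤ g2 ∧ 1 ≤ f2 then
        (2 + (a : ℚ) - (g1 : ℚ)) * Q a g1 * (2 + (b : ℚ) - (g2 : ℚ)) * Q b g2 *
          (2 * (j : ℚ) + 1) * Q j f2
      else 0)).symm
  rw [step1, ← Finset.sum_product', step2, ← Finset.sum_filter]
  refine Finset.sum_nbij' (fun r => (r.2.1, r.1.2.1, r.2.2.1, r.2.2.2.1, r.1.2.2.2, r.2.2.2.2))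
    (fun w => ((w.1 + w.2.2.1 + 1, w.2.1, w.2.2.2.1 + w.2.2.2.2.2, w.2.2.2.2.1),
               (w.1, w.2.2.1, w.2.2.2.1, w.2.2.2.2.2))) ?_ ?_ ?_ ?_ ?_
  · rintro ⟨⟨i,j,f1,f2⟩,⟨a,b,g1,g2⟩⟩ hr
    simp only [Box, Box6, Finset.mem_filter, Finset.mem_product, Finset.mem_range,
      true_and, and_true] at hr ⊢
    omega
  · rintro ⟨a,b,j,g1,g2,f2⟩ hw
    simp only [Box, Box6, Finset.mem_filter, Finset.mem_product, Finset.mem_range,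
      true_and, and_true] at hw ⊢
    omega
  · rintro ⟨⟨i,j,f1,f2⟩,⟨a,b,g1,g2⟩⟩ hr
    simp only [Box, Box6, Finset.mem_filter, Finset.mem_product, Finset.mem_range] at hr
    simp only [Prod.mk.injEq, and_true, true_and, eq_self_iff_true]
    omega
  · rintro ⟨a,b,j,g1,g2,f2⟩ hw
    rfl
  · rintro ⟨⟨i,j,f1,f2⟩,⟨a,b,g1,g2⟩⟩ hr
    ring


end CSRHelpers

open Finset in
theorem cut_slide_remy_first_step (n f : ℕ) (hn : 1 ≤ n) (hf : 1 ≤ f)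
    (Q : ℕ → ℕ → ℚ)
    (hcs : ∀ (n' f' : ℕ), ((f' : ℚ) - 1) * Q n' f' = csSum Q n' f')
    (hremy : ∀ (n' f' : ℕ), 1 ≤ n' → 1 ≤ f' →
      (2 + (n' : ℚ) - (f' : ℚ)) * Q n' f' =
        2 * (2 * (n' : ℚ) - 1) * Q (n' - 1) f' + remySum Q n' f')
    (hzero : ∀ n', Q n' 0 = 0)
    (hinit : ∀ f', Q 0 f' = if f' = 1 then 1 else 0) :
    ((f : ℚ) - 1) * Q n f =
      (2 * (n : ℚ) - 1) * Q (n - 1) (f - 1) +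
        2 * ccQuad Q n f +
        (∑ i ∈ Finset.range (n + 1), ∑ j ∈ Finset.range (n + 1),
          ∑ f1 ∈ Finset.range (f + 1), ∑ f2 ∈ Finset.range (f + 1),
            if i + j + 1 = n ∧ f1 + f2 = f ∧ 1 ≤ f1 ∧ 1 ≤ f2 then
              ((f1 : ℚ) - 1) * Q i f1 * (2 + (j : ℚ) - (f2 : ℚ)) * Q j f2
            else 0) := by
  have split : csSum Q n f =
      (∑ i ∈ range (n+1), ∑ j ∈ range (n+1), ∑ f1 ∈ range (f+1), ∑ f2 ∈ range (f+1),
        if (i + j + 1 = n ∧ f1 + f2 = f ∧ 1 ≤ f1 ∧ 1 ≤ f2) ∧ i = 0 then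
          (2 + (i : ℚ) - (f1 : ℚ)) * Q i f1 * (2 * (j : ℚ) + 1) * Q j f2 else 0)
      + ((∑ i ∈ range (n+1), ∑ j ∈ range (n+1), ∑ f1 ∈ range (f+1), ∑ f2 ∈ range (f+1),
          if (i + j + 1 = n ∧ f1 + f2 = f ∧ 1 ≤ f1 ∧ 1 ≤ f2) ∧ 1 ≤ i then
            2 * (2 * (i : ℚ) - 1) * Q (i - 1) f1 * ((2 * (j : ℚ) + 1) * Q j f2) else 0)
        + (∑ i ∈ range (n+1), ∑ j ∈ range (n+1), ∑ f1 ∈ range (f+1), ∑ f2 ∈ range (f+1),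
          if (i + j + 1 = n ∧ f1 + f2 = f ∧ 1 ≤ f1 ∧ 1 ≤ f2) ∧ 1 ≤ i then
            remySum Q i f1 * ((2 * (j : ℚ) + 1) * Q j f2) else 0)) := by
    rw [csSum]
    rw [show (∑ i ∈ range (n+1), ∑ j ∈ range (n+1), ∑ f1 ∈ range (f+1), ∑ f2 ∈ range (f+1),
        if i + j + 1 = n ∧ f1 + f2 = f ∧ 1 ≤ f1 ∧ 1 ≤ f2 then
          (2 + (i : ℚ) - (f1 : ℚ)) * Q i f1 * (2 * (j : ℚ) + 1) * Q j f2 else 0)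
      = ∑ i ∈ range (n+1), ∑ j ∈ range (n+1), ∑ f1 ∈ range (f+1), ∑ f2 ∈ range (f+1),
        ((if (i + j + 1 = n ∧ f1 + f2 = f ∧ 1 ≤ f1 ∧ 1 ≤ f2) ∧ i = 0 then
          (2 + (i : ℚ) - (f1 : ℚ)) * Q i f1 * (2 * (j : ℚ) + 1) * Q j f2 else 0)
        + ((if (i + j + 1 = n ∧ f1 + f2 = f ∧ 1 ≤ f1 ∧ 1 ≤ f2) ∧ 1 ≤ i then
            2 * (2 * (i : ℚ) - 1) * Q (i - 1) f1 * ((2 * (j : ℚ) + 1) * Q j f2) else 0)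
          + (if (i + j + 1 = n ∧ f1 + f2 = f ∧ 1 ≤ f1 ∧ 1 ≤ f2) ∧ 1 ≤ i then
            remySum Q i f1 * ((2 * (j : ℚ) + 1) * Q j f2) else 0))) from ?_]
    · simp only [Finset.sum_add_distrib]
    refine Finset.sum_congr rfl fun i _ => Finset.sum_congr rfl fun j _ =>
      Finset.sum_congr rfl fun f1 _ => Finset.sum_congr rfl fun f2 _ => ?_
    by_cases hC : i + j + 1 = n ∧ f1 + f2 = f ∧ 1 ≤ f1 ∧ 1 ≤ f2
    · by_cases hi : i = 0
      · have hno : ¬((i + j + 1 = n ∧ f1 + f2 = f ∧ 1 ≤ f1 ∧ 1 ≤ f2) ∧ 1 ≤ i) := by omega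
        rw [if_pos hC, if_pos ⟨hC, hi⟩, if_neg hno, if_neg hno]
        ring
      · have hi' : 1 ≤ i := by omega
        have hno : ¬((i + j + 1 = n ∧ f1 + f2 = f ∧ 1 ≤ f1 ∧ 1 ≤ f2) ∧ i = 0) := by omega
        have h := hremy i f1 hi' hC.2.2.1
        rw [if_pos hC, if_neg hno, if_pos ⟨hC, hi'⟩, if_pos ⟨hC, hi'⟩, zero_add]
        calc (2 + (i : ℚ) - (f1 : ℚ)) * Q i f1 * (2 * (j : ℚ) + 1) * Q j f2
            = ((2 + (i : ℚ) - (f1 : ℚ)) * Q i f1) * ((2 * (j : ℚ) + 1) * Q j f2) := by ring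
          _ = (2 * (2 * (i : ℚ) - 1) * Q (i - 1) f1 + remySum Q i f1) *
                ((2 * (j : ℚ) + 1) * Q j f2) := by rw [h]
          _ = 2 * (2 * (i : ℚ) - 1) * Q (i - 1) f1 * ((2 * (j : ℚ) + 1) * Q j f2)
              + remySum Q i f1 * ((2 * (j : ℚ) + 1) * Q j f2) := by ring
    · have hno0 : ¬((i + j + 1 = n ∧ f1 + f2 = f ∧ 1 ≤ f1 ∧ 1 ≤ f2) ∧ i = 0) := fun h => hC h.1
      have hno1 : ¬((i + j + 1 = n ∧ f1 + f2 = f ∧ 1 ≤ f1 ∧ 1 ≤ f2) ∧ 1 ≤ i) := fun h => hC h.1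
      rw [if_neg hC, if_neg hno0, if_neg hno1, if_neg hno1]
      norm_num
  have hT0 : (∑ i ∈ range (n+1), ∑ j ∈ range (n+1), ∑ f1 ∈ range (f+1), ∑ f2 ∈ range (f+1),
        if (i + j + 1 = n ∧ f1 + f2 = f ∧ 1 ≤ f1 ∧ 1 ≤ f2) ∧ i = 0 then
          (2 + (i : ℚ) - (f1 : ℚ)) * Q i f1 * (2 * (j : ℚ) + 1) * Q j f2 else 0)
      = (2 * (n : ℚ) - 1) * Q (n - 1) (f - 1) := by
    have point : ∀ i ∈ range (n+1), ∀ j ∈ range (n+1), ∀ f1 ∈ range (f+1), ∀ f2 ∈ range (f+1),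
        (if (i + j + 1 = n ∧ f1 + f2 = f ∧ 1 ≤ f1 ∧ 1 ≤ f2) ∧ i = 0 then
          (2 + (i : ℚ) - (f1 : ℚ)) * Q i f1 * (2 * (j : ℚ) + 1) * Q j f2 else 0)
        = (if f2 = f - 1 then if f1 = 1 then if j = n - 1 then if i = 0 then
            (if 2 ≤ f then (2 * (n : ℚ) - 1) * Q (n - 1) (f - 1) else 0)
            else 0 else 0 else 0 else 0) := by
      intro i _ j _ f1 _ f2 _
      by_cases hC2 : (i + j + 1 = n ∧ f1 + f2 = f ∧ 1 ≤ f1 ∧ 1 ≤ f2) ∧ i = 0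
      · obtain ⟨⟨e1, e2, e3, e4⟩, e5⟩ := hC2
        by_cases h1 : f1 = 1
        · have hf2 : f2 = f - 1 := by omega
          have hj : j = n - 1 := by omega
          rw [if_pos ⟨⟨e1, e2, e3, e4⟩, e5⟩, if_pos hf2, if_pos h1, if_pos hj, if_pos e5,
              if_pos (show 2 ≤ f by omega)]
          subst e5; subst h1; subst hj; subst hf2
          rw [hinit 1]
          simp only [if_pos rfl]
          rw [Nat.cast_sub hn]
          push_cast
          ring
        · have hf2 : ¬(f2 = f - 1) := by omega
          rw [if_pos ⟨⟨e1, e2, e3, e4⟩, e5⟩, if_neg hf2]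
          subst e5
          rw [hinit f1]
          simp [h1]
      · rw [if_neg hC2]
        split_ifs with h1 h2 h3 h4 h5
        · exact absurd ⟨⟨by omega, by omega, by omega, by omega⟩, h4⟩ hC2
        all_goals rfl
    rw [Finset.sum_congr rfl (fun i hi => Finset.sum_congr rfl (fun j hj =>
      Finset.sum_congr rfl (fun f1 h1 => Finset.sum_congr rfl (fun f2 h2 =>
        point i hi j hj f1 h1 f2 h2))))]
    simp only [Finset.sum_ite_eq', Finset.mem_range, Nat.lt_succ_iff, Nat.sub_le, hf,
      Nat.zero_le, if_true]
    by_cases h2 : 2 ≤ f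
    · rw [if_pos h2]
    · have hf1 : f = 1 := by omega
      subst hf1
      simp [hzero]
  have hT1 : (∑ i ∈ range (n+1), ∑ j ∈ range (n+1), ∑ f1 ∈ range (f+1), ∑ f2 ∈ range (f+1),
        if (i + j + 1 = n ∧ f1 + f2 = f ∧ 1 ≤ f1 ∧ 1 ≤ f2) ∧ 1 ≤ i then
          2 * (2 * (i : ℚ) - 1) * Q (i - 1) f1 * ((2 * (j : ℚ) + 1) * Q j f2) else 0)
      = 2 * ccQuad Q n f := by
    have l1 : (∑ i ∈ range (n+1), ∑ j ∈ range (n+1), ∑ f1 ∈ range (f+1), ∑ f2 ∈ range (f+1),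
        if (i + j + 1 = n ∧ f1 + f2 = f ∧ 1 ≤ f1 ∧ 1 ≤ f2) ∧ 1 ≤ i then
          2 * (2 * (i : ℚ) - 1) * Q (i - 1) f1 * ((2 * (j : ℚ) + 1) * Q j f2) else 0)
        = ∑ p ∈ (Box n f).filter (fun p =>
            (p.1 + p.2.1 + 1 = n ∧ p.2.2.1 + p.2.2.2 = f ∧ 1 ≤ p.2.2.1 ∧ 1 ≤ p.2.2.2) ∧ 1 ≤ p.1),
            2 * (2 * (p.1 : ℚ) - 1) * Q (p.1 - 1) p.2.2.1 *
              ((2 * (p.2.1 : ℚ) + 1) * Q p.2.1 p.2.2.2) := by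
      rw [Finset.sum_filter]
      exact (sum_Box n f (fun i j f1 f2 =>
        if (i + j + 1 = n ∧ f1 + f2 = f ∧ 1 ≤ f1 ∧ 1 ≤ f2) ∧ 1 ≤ i then
          2 * (2 * (i : ℚ) - 1) * Q (i - 1) f1 * ((2 * (j : ℚ) + 1) * Q j f2) else 0)).symm
    have l2 : 2 * ccQuad Q n f
        = ∑ p ∈ (Box n f).filter (fun p =>
            p.1 + p.2.1 + 2 = n ∧ p.2.2.1 + p.2.2.2 = f ∧ 1 ≤ p.2.2.1 ∧ 1 ≤ p.2.2.2),
            2 * ((2 * (p.1 : ℚ) + 1) * (2 * (p.2.1 : ℚ) + 1) * Q p.1 p.2.2.1 * Q p.2.1 p.2.2.2) := by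
      rw [Finset.sum_filter]
      calc 2 * ccQuad Q n f
          = ∑ i ∈ range (n+1), ∑ j ∈ range (n+1), ∑ f1 ∈ range (f+1), ∑ f2 ∈ range (f+1),
            if i + j + 2 = n ∧ f1 + f2 = f ∧ 1 ≤ f1 ∧ 1 ≤ f2 then
              2 * ((2 * (i : ℚ) + 1) * (2 * (j : ℚ) + 1) * Q i f1 * Q j f2) else 0 := by
            rw [ccQuad]; simp only [Finset.mul_sum, mul_ite, mul_zero]
        _ = _ := (sum_Box n f (fun i j f1 f2 =>
            if i + j + 2 = n ∧ f1 + f2 = f ∧ 1 ≤ f1 ∧ 1 ≤ f2 then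
              2 * ((2 * (i : ℚ) + 1) * (2 * (j : ℚ) + 1) * Q i f1 * Q j f2) else 0)).symm
    rw [l1, l2]
    refine Finset.sum_nbij' (fun p => (p.1 - 1, p.2.1, p.2.2.1, p.2.2.2))
      (fun q => (q.1 + 1, q.2.1, q.2.2.1, q.2.2.2)) ?_ ?_ ?_ ?_ ?_
    · rintro ⟨i,j,f1,f2⟩ h
      simp only [Box, Finset.mem_filter, Finset.mem_product, Finset.mem_range] at h ⊢
      omega
    · rintro ⟨i,j,f1,f2⟩ h
      simp only [Box, Finset.mem_filter, Finset.mem_product, Finset.mem_range] at h ⊢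
      omega
    · rintro ⟨i,j,f1,f2⟩ h
      simp only [Box, Finset.mem_filter, Finset.mem_product, Finset.mem_range] at h
      simp only [Prod.mk.injEq, and_true, true_and]
      omega
    · rintro ⟨i,j,f1,f2⟩ h
      simp only [Prod.mk.injEq, and_true, true_and]
      omega
    · rintro ⟨i,j,f1,f2⟩ h
      simp only [Box, Finset.mem_filter, Finset.mem_product, Finset.mem_range] at h
      have hc : ((i - 1 : ℕ) : ℚ) = (i : ℚ) - 1 := by
        rw [Nat.cast_sub h.2.2]; norm_num
      rw [hc]
      ring
  have hlast : (∑ i ∈ Finset.range (n + 1), ∑ j ∈ Finset.range (n + 1),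
          ∑ f1 ∈ Finset.range (f + 1), ∑ f2 ∈ Finset.range (f + 1),
            if i + j + 1 = n ∧ f1 + f2 = f ∧ 1 ≤ f1 ∧ 1 ≤ f2 then
              ((f1 : ℚ) - 1) * Q i f1 * (2 + (j : ℚ) - (f2 : ℚ)) * Q j f2
            else 0)
      = midSum Q n f := by
    rw [← keyB Q n f]
    refine Finset.sum_congr rfl fun i _ => Finset.sum_congr rfl fun j _ =>
      Finset.sum_congr rfl fun f1 _ => Finset.sum_congr rfl fun f2 _ => ?_
    split_ifs with h
    · have hh := hcs i f1
      calc ((f1 : ℚ) - 1) * Q i f1 * (2 + (j : ℚ) - (f2 : ℚ)) * Q j f2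
          = (((f1 : ℚ) - 1) * Q i f1) * ((2 + (j : ℚ) - (f2 : ℚ)) * Q j f2) := by ring
        _ = csSum Q i f1 * ((2 + (j : ℚ) - (f2 : ℚ)) * Q j f2) := by rw [hh]
    · rfl
  rw [hcs n f, split, hT0, hT1, keyA, ← hlast]
  ring
end
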